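/- arXiv:2511.14871 — 6 statements merged into one kernel-verified Lean document; each statement's English description precedes it below -/
import Mathlib

section
/- Let G be the disjoint union of L₂ copies of the complete graph K_{L₁}, where 2 ≤ L₁ < L₂. Then χ(G) = L₁ and χ^FAT(G) = L₂. -/
open SimpleGraph
open scoped Classical

/-- A FAT `k`-coloring of a graph `G`: a partition of the vertex set into `k`
nonempty color classes `P 0, ..., P (k-1)` together with parameters
`α, β ∈ [0,1]` such that every vertex `v` has exactly `α · deg v` neighbors in
each class not containing `v` and exactly `β · deg v` neighbors in its own class. -/
def IsFATColoring {V : Type*} (G : SimpleGraph V) (k : ℕ)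
    (P : Fin k → Set V) (α β : ℝ) : Prop :=
  (∀ i, (P i).Nonempty) ∧
  (∀ v : V, ∃! i, v ∈ P i) ∧
  0 ≤ α ∧ α ≤ 1 ∧ 0 ≤ β ∧ β ≤ 1 ∧
  ∀ (v : V) (i : Fin k),
    ((G.neighborSet v ∩ P i).ncard : ℝ) =
      if v ∈ P i then β * (G.neighborSet v).ncard
      else α * (G.neighborSet v).ncard

/-- The FAT chromatic number of `G`: the largest `k` for which `G` admits a
FAT `k`-coloring. -/
noncomputable def fatChromaticNumber {V : Type*} (G : SimpleGraph V) : ℕ :=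
  sSup {k : ℕ | ∃ P : Fin k → Set V, ∃ α β : ℝ, IsFATColoring G k P α β}

/-- The disjoint union of `L₂` copies of the complete graph `K_{L₁}`:
vertices are pairs `(copy, vertex)`, adjacent iff same copy, different vertex. -/
def cliquesUnion (L₂ L₁ : ℕ) : SimpleGraph (Fin L₂ × Fin L₁) where
  Adj a b := a.1 = b.1 ∧ a.2 ≠ b.2
  symm := ⟨fun a b h => ⟨h.1.symm, h.2.symm⟩⟩
  loopless := ⟨fun a h => h.2 rfl⟩

lemma cliquesUnion_neighborSet (L₂ L₁ : ℕ) (v : Fin L₂ × Fin L₁) :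
    (cliquesUnion L₂ L₁).neighborSet v = (fun x => (v.1, x)) '' {v.2}ᶜ := by
  ext w
  constructor
  · rintro ⟨h1, h2⟩
    exact ⟨w.2, Set.mem_compl_singleton_iff.mpr (Ne.symm h2), Prod.ext h1 rfl⟩
  · rintro ⟨x, hx, rfl⟩
    exact ⟨rfl, fun h => (Set.mem_compl_singleton_iff.mp hx) h.symm⟩

lemma cliquesUnion_deg (L₂ L₁ : ℕ) (v : Fin L₂ × Fin L₁) :
    ((cliquesUnion L₂ L₁).neighborSet v).ncard = L₁ - 1 := by
  rw [cliquesUnion_neighborSet]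
  rw [Set.ncard_image_of_injective _ (fun a b h => by simpa using h)]
  simp [Set.ncard_eq_toFinset_card', Finset.card_compl]

theorem fat_cliques_union (L₁ L₂ : ℕ) (h1 : 2 ≤ L₁) (h2 : L₁ < L₂) :
    (cliquesUnion L₂ L₁).chromaticNumber = (L₁ : ℕ∞) ∧
    fatChromaticNumber (cliquesUnion L₂ L₁) = L₂ := by
  have hL₂pos : 0 < L₂ := lt_of_le_of_lt (Nat.zero_le _) h2
  have hL₁pos : 0 < L₁ := lt_of_lt_of_le (by norm_num) h1
  constructor
  · -- chromatic number
    apply le_antisymm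
    · have : (cliquesUnion L₂ L₁).Colorable L₁ :=
        ⟨Coloring.mk (fun v => v.2) (fun {a b} h => h.2)⟩
      exact this.chromaticNumber_le
    · have f : (⊤ : SimpleGraph (Fin L₁)) ↪g cliquesUnion L₂ L₁ := by
        refine ⟨⟨fun x => (⟨0, hL₂pos⟩, x), fun a b h => by simpa using h⟩, ?_⟩
        intro a b
        constructor
        · rintro ⟨-, h⟩
          exact h
        · intro h
          exact ⟨rfl, h⟩
      have := chromaticNumber_mono_of_hom f.toHom
      rwa [chromaticNumber_top, Fintype.card_fin] at this
  · -- FAT chromatic number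
    have hmem : L₂ ∈ {k : ℕ | ∃ P : Fin k → Set (Fin L₂ × Fin L₁),
        ∃ α β : ℝ, IsFATColoring (cliquesUnion L₂ L₁) k P α β} := by
      refine ⟨fun i => {v | v.1 = i}, 0, 1, ?_, ?_, by norm_num, by norm_num,
        by norm_num, by norm_num, ?_⟩
      · exact fun i => ⟨(i, ⟨0, hL₁pos⟩), rfl⟩
      · exact fun v => ⟨v.1, rfl, fun j hj => hj.symm⟩
      · intro v i
        simp only [Set.mem_setOf_eq]
        by_cases hv : v.1 = i
        · rw [if_pos hv]
          have : (cliquesUnion L₂ L₁).neighborSet v ∩ {w | w.1 = i} =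
              (cliquesUnion L₂ L₁).neighborSet v := by
            apply Set.inter_eq_left.2
            rintro w ⟨hw1, -⟩
            simp [Set.mem_setOf_eq, ← hw1, hv]
          rw [this]; ring
        · rw [if_neg hv]
          have : (cliquesUnion L₂ L₁).neighborSet v ∩ {w | w.1 = i} = ∅ := by
            ext w
            simp only [Set.mem_inter_iff, Set.mem_empty_iff_false, iff_false]
            rintro ⟨⟨hw1, -⟩, hw2⟩
            exact hv (hw1.trans hw2)
          rw [this]; simp
    have hbdd : ∀ k ∈ {k : ℕ | ∃ P : Fin k → Set (Fin L₂ × Fin L₁),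
        ∃ α β : ℝ, IsFATColoring (cliquesUnion L₂ L₁) k P α β}, k ≤ L₂ := by
      rintro k ⟨P, α, β, hne, hpart, hα0, hα1, hβ0, hβ1, hcnt⟩
      have hdeg : ∀ v, (((cliquesUnion L₂ L₁).neighborSet v).ncard : ℝ) = (L₁ - 1 : ℕ) := by
        intro v; rw [cliquesUnion_deg]
      by_cases hα : α = 0
      · -- all neighbors in own class; classes are unions of copies
        subst hα
        set f : Fin k → Fin L₂ := fun i => ((hne i).choose).1 with hf
        have hmemP : ∀ i, (hne i).choose ∈ P i := fun i => (hne i).choose_spec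
        have hinj : Function.Injective f := by
          intro i j hij
          set vi := (hne i).choose
          set vj := (hne j).choose
          by_cases heq : vi.2 = vj.2
          · have : vi = vj := Prod.ext hij heq
            obtain ⟨c, -, hu⟩ := hpart vi
            exact (hu i (hmemP i)).trans (hu j (by rw [this]; exact hmemP j)).symm
          · -- vj is a neighbor of vi
            have hadj : vj ∈ (cliquesUnion L₂ L₁).neighborSet vi := ⟨hij, heq⟩
            by_contra hij'
            have hvinotj : vi ∉ P j := by
              intro h
              obtain ⟨c, -, hu⟩ := hpart vi
              exact hij' ((hu i (hmemP i)).trans (hu j h).symm)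
            have hc := hcnt vi j
            rw [if_neg hvinotj, zero_mul] at hc
            have : ((cliquesUnion L₂ L₁).neighborSet vi ∩ P j) = ∅ := by
              have := Nat.cast_eq_zero.mp hc
              exact (Set.ncard_eq_zero (Set.toFinite _)).mp this
            exact absurd (this ▸ ⟨hadj, hmemP j⟩) (Set.notMem_empty vj)
        have := Fintype.card_le_of_injective f hinj
        simpa using this
      · -- α > 0 : k ≤ L₁ < L₂
        have hαpos : 0 < α := lt_of_le_of_ne hα0 (Ne.symm hα)
        rcases Nat.eq_zero_or_pos k with hk | hk
        · omega
        set v : Fin L₂ × Fin L₁ := (⟨0, hL₂pos⟩, ⟨0, hL₁pos⟩) with hv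
        obtain ⟨i₀, hi₀, hu₀⟩ := hpart v
        -- each class other than i₀ meets N(v); build injection into insert v (N v)
        set S : Set (Fin L₂ × Fin L₁) := insert v ((cliquesUnion L₂ L₁).neighborSet v) with hS
        have hvnotN : v ∉ (cliquesUnion L₂ L₁).neighborSet v := fun h => h.2 rfl
        have hchoice : ∀ j : Fin k, ∃ w : Fin L₂ × Fin L₁, w ∈ S ∧ w ∈ P j := by
          intro j
          by_cases hj : j = i₀
          · exact ⟨v, Set.mem_insert _ _, hj ▸ hi₀⟩
          · have hvj : v ∉ P j := fun h => hj (hu₀ j h)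
            have hc := hcnt v j
            rw [if_neg hvj] at hc
            have hpos : 0 < ((cliquesUnion L₂ L₁).neighborSet v ∩ P j).ncard := by
              by_contra h
              push_neg at h
              rw [Nat.le_zero.mp h] at hc
              have hdv : (((cliquesUnion L₂ L₁).neighborSet v).ncard : ℝ) = ((L₁ - 1 : ℕ) : ℝ) := hdeg v
              rw [hdv] at hc
              have hpos' : ((L₁ - 1 : ℕ) : ℝ) > 0 := by
                have : 1 ≤ L₁ - 1 := by omega
                exact_mod_cast lt_of_lt_of_le zero_lt_one (by exact_mod_cast this)
              push_cast at hc
              nlinarith [mul_pos hαpos hpos']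
            obtain ⟨w, hw1, hw2⟩ := Set.nonempty_of_ncard_ne_zero hpos.ne'
            exact ⟨w, Set.mem_insert_of_mem _ hw1, hw2⟩
        choose g hgS hgP using hchoice
        have hginj : Function.Injective g := by
          intro i j hij
          obtain ⟨c, -, hu⟩ := hpart (g i)
          exact (hu i (hgP i)).trans (hu j (hij ▸ hgP j)).symm
        -- map into subtype of S
        have hcard : k ≤ S.ncard := by
          have : Function.Injective (fun i : Fin k => (⟨g i, hgS i⟩ : S)) := by
            intro a b h
            exact hginj (congrArg Subtype.val h)
          have := Fintype.card_le_of_injective _ this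
          rw [Fintype.card_fin, ← Nat.card_eq_fintype_card, Nat.card_coe_set_eq] at this
          exact this
        have hScard : S.ncard = L₁ := by
          rw [hS, Set.ncard_insert_of_notMem hvnotN (Set.toFinite _), cliquesUnion_deg]
          omega
        omega
    exact le_antisymm (csSup_le ⟨L₂, hmem⟩ hbdd) (le_csSup ⟨L₂, hbdd⟩ hmem)
end

section
/- Let 1 < L₁ < L₂ and let G be the disjoint union of L₁ − 1 copies of the complete graph K_{L₁} together with one copy of K_{L₂}. Then χ(G) = L₂ and χ^FAT(G) = L₁. -/
open SimpleGraph
open scoped Classical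

/-- The disjoint union of `L₁ - 1` copies of `K_{L₁}` together with one
copy of `K_{L₂}`. -/
def cliquesUnionTwo (L₁ L₂ : ℕ) :
    SimpleGraph ((Fin (L₁ - 1) × Fin L₁) ⊕ Fin L₂) where
  Adj a b :=
    match a, b with
    | Sum.inl x, Sum.inl y => x.1 = y.1 ∧ x.2 ≠ y.2
    | Sum.inr x, Sum.inr y => x ≠ y
    | _, _ => False
  symm := by
    constructor
    rintro (x | x) (y | y) h
    · exact ⟨h.1.symm, h.2.symm⟩
    · exact h.elim
    · exact h.elim
    · exact h.symm
  loopless := by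
    constructor
    rintro (x | x) h
    · exact h.2 rfl
    · exact h rfl

def fcomp (L₁ : ℕ) {L₂ : ℕ} : (Fin (L₁ - 1) × Fin L₁) ⊕ Fin L₂ → ℕ
  | Sum.inl x => x.1.1
  | Sum.inr _ => L₁ - 1

lemma fcomp_lt {L₁ L₂ : ℕ} (h1 : 1 < L₁) (v : (Fin (L₁ - 1) × Fin L₁) ⊕ Fin L₂) :
    fcomp L₁ v < L₁ := by
  rcases v with x | x
  · exact lt_of_lt_of_le x.1.2 (Nat.sub_le _ _)
  · simp only [fcomp]; omega

lemma fcomp_cases {L₁ L₂ : ℕ} (v : (Fin (L₁ - 1) × Fin L₁) ⊕ Fin L₂) :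
    fcomp L₁ v < L₁ - 1 ∨ fcomp L₁ v = L₁ - 1 := by
  rcases v with x | x
  · exact Or.inl x.1.2
  · exact Or.inr rfl

lemma adj_iff (L₁ L₂ : ℕ) (v w : (Fin (L₁ - 1) × Fin L₁) ⊕ Fin L₂) :
    (cliquesUnionTwo L₁ L₂).Adj v w ↔ fcomp L₁ v = fcomp L₁ w ∧ v ≠ w := by
  rcases v with x | x <;> rcases w with y | y
  · show (x.1 = y.1 ∧ x.2 ≠ y.2) ↔ _
    simp only [fcomp, ne_eq, Sum.inl.injEq]
    constructor
    · rintro ⟨h, h2⟩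
      exact ⟨by rw [h], fun he => h2 (by rw [he])⟩
    · rintro ⟨h, h2⟩
      have h1 : x.1 = y.1 := Fin.ext h
      exact ⟨h1, fun h2' => h2 (Prod.ext h1 h2')⟩
  · show False ↔ _
    simp only [fcomp]
    exact ⟨False.elim, fun h => absurd h.1 (Nat.ne_of_lt x.1.2)⟩
  · show False ↔ _
    simp only [fcomp]
    exact ⟨False.elim, fun h => absurd h.1.symm (Nat.ne_of_lt y.1.2)⟩
  · show x ≠ y ↔ _
    simp only [fcomp, ne_eq, Sum.inr.injEq, true_and]

lemma nbhd (L₁ L₂ : ℕ) (v : (Fin (L₁ - 1) × Fin L₁) ⊕ Fin L₂) :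
    (cliquesUnionTwo L₁ L₂).neighborSet v
      = {w | fcomp L₁ w = fcomp L₁ v} \ {v} := by
  ext w
  simp only [mem_neighborSet, adj_iff, Set.mem_diff, Set.mem_setOf_eq,
    Set.mem_singleton_iff]
  constructor
  · rintro ⟨h, h2⟩; exact ⟨h.symm, fun he => h2 he.symm⟩
  · rintro ⟨h, h2⟩; exact ⟨h.symm, fun he => h2 he.symm⟩

lemma comp_set_small {L₁ L₂ : ℕ} {c : ℕ} (hc : c < L₁ - 1) :
    {w : (Fin (L₁ - 1) × Fin L₁) ⊕ Fin L₂ | fcomp L₁ w = c}.ncard = L₁ := by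
  have he : {w : (Fin (L₁ - 1) × Fin L₁) ⊕ Fin L₂ | fcomp L₁ w = c}
      = Set.range (fun i : Fin L₁ => (Sum.inl (⟨c, hc⟩, i) : (Fin (L₁-1) × Fin L₁) ⊕ Fin L₂)) := by
    ext w
    rcases w with x | x
    · simp only [fcomp, Set.mem_setOf_eq, Set.mem_range]
      constructor
      · intro h
        exact ⟨x.2, by rw [show (⟨c, hc⟩ : Fin (L₁-1)) = x.1 from Fin.ext h.symm]⟩
      · rintro ⟨i, hi⟩
        cases hi
        rfl
    · simp only [fcomp, Set.mem_setOf_eq, Set.mem_range]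
      constructor
      · intro h; omega
      · rintro ⟨i, hi⟩; cases hi
  rw [he, ← Set.image_univ,
    Set.ncard_image_of_injective _ (fun a b hab => by
      simpa [Prod.ext_iff] using hab), Set.ncard_univ]
  simp

lemma comp_set_big {L₁ L₂ : ℕ} :
    {w : (Fin (L₁ - 1) × Fin L₁) ⊕ Fin L₂ | fcomp L₁ w = L₁ - 1}.ncard = L₂ := by
  have he : {w : (Fin (L₁ - 1) × Fin L₁) ⊕ Fin L₂ | fcomp L₁ w = L₁ - 1}
      = Set.range (Sum.inr : Fin L₂ → _) := by
    ext w
    rcases w with x | x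
    · simp only [fcomp, Set.mem_setOf_eq, Set.mem_range]
      constructor
      · intro h; exact absurd h (Nat.ne_of_lt x.1.2)
      · rintro ⟨i, hi⟩; cases hi
    · simp [fcomp]
  rw [he, ← Set.image_univ, Set.ncard_image_of_injective _ Sum.inr_injective,
    Set.ncard_univ]
  simp

lemma deg_small {L₁ L₂ : ℕ} {v : (Fin (L₁ - 1) × Fin L₁) ⊕ Fin L₂}
    (h : fcomp L₁ v < L₁ - 1) :
    ((cliquesUnionTwo L₁ L₂).neighborSet v).ncard = L₁ - 1 := by
  rw [nbhd, Set.ncard_diff_singleton_of_mem (show v ∈ {w | fcomp L₁ w = fcomp L₁ v} from rfl),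
    comp_set_small h]

lemma deg_big {L₁ L₂ : ℕ} {v : (Fin (L₁ - 1) × Fin L₁) ⊕ Fin L₂}
    (h : fcomp L₁ v = L₁ - 1) :
    ((cliquesUnionTwo L₁ L₂).neighborSet v).ncard = L₂ - 1 := by
  rw [nbhd, Set.ncard_diff_singleton_of_mem (show v ∈ {w | fcomp L₁ w = fcomp L₁ v} from rfl),
    h, comp_set_big]

lemma fat_le {L₁ L₂ : ℕ} (h1 : 1 < L₁) (h2 : L₁ < L₂) (k : ℕ)
    (P : Fin k → Set ((Fin (L₁ - 1) × Fin L₁) ⊕ Fin L₂)) (α β : ℝ)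
    (hF : IsFATColoring (cliquesUnionTwo L₁ L₂) k P α β) : k ≤ L₁ := by
  obtain ⟨hne, huniq, hα0, -, hβ0, -, hcount⟩ := hF
  set G := cliquesUnionTwo L₁ L₂ with hG
  by_cases hk : k ≤ 1
  · omega
  push_neg at hk
  have hdisj : ∀ v i j, v ∈ P i → v ∈ P j → i = j := by
    intro v i j hi hj
    obtain ⟨c, -, hu⟩ := huniq v
    rw [hu i hi, hu j hj]
  have hdpos : ∀ v, 0 < (G.neighborSet v).ncard := by
    intro v
    rcases fcomp_cases v with h | h
    · rw [deg_small h]; omega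
    · rw [deg_big h]; omega
  -- key dichotomy
  have key : ∀ v₀, α = 0 ∨
      α * ((G.neighborSet v₀).ncard : ℝ) = β * ((G.neighborSet v₀).ncard : ℝ) + 1 := by
    intro v₀
    obtain ⟨j, hv₀j, -⟩ := huniq v₀
    by_cases hmono : ∀ w, fcomp L₁ w = fcomp L₁ v₀ → w ∈ P j
    · left
      obtain ⟨i, hij⟩ := Fintype.exists_ne_of_one_lt_card (by simpa using hk) j
      have hvi : v₀ ∉ P i := fun h => hij (hdisj v₀ i j h hv₀j)
      have hc := hcount v₀ i
      rw [if_neg hvi] at hc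
      have hempty : G.neighborSet v₀ ∩ P i = ∅ := by
        ext u
        simp only [Set.mem_inter_iff, Set.mem_empty_iff_false, iff_false, not_and]
        intro hu hui
        rw [nbhd] at hu
        exact hij (hdisj u i j hui (hmono u hu.1))
      rw [hempty] at hc
      simp only [Set.ncard_empty, Nat.cast_zero] at hc
      have : ((G.neighborSet v₀).ncard : ℝ) ≠ 0 := by
        exact_mod_cast (hdpos v₀).ne'
      rcases mul_eq_zero.1 hc.symm with h | h
      · exact h
      · exact absurd h this
    · right
      push_neg at hmono
      obtain ⟨w, hw, hwj⟩ := hmono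
      obtain ⟨i, hwi, -⟩ := huniq w
      have hij : i ≠ j := fun he => hwj (he ▸ hwi)
      have hwv : w ≠ v₀ := fun he => hwj (he ▸ hv₀j)
      have hvi : v₀ ∉ P i := fun h => hij (hdisj v₀ i j h hv₀j)
      set C := {u | fcomp L₁ u = fcomp L₁ v₀} with hC
      set S := C ∩ P i with hS
      have e1 : G.neighborSet v₀ ∩ P i = S := by
        rw [nbhd]
        ext u
        simp only [Set.mem_inter_iff, Set.mem_diff, Set.mem_singleton_iff, hS]
        constructor
        · rintro ⟨⟨h, -⟩, h2⟩; exact ⟨h, h2⟩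
        · rintro ⟨h, h2⟩
          exact ⟨⟨h, fun he => hvi (he ▸ h2)⟩, h2⟩
      have e2 : G.neighborSet w ∩ P i = S \ {w} := by
        rw [nbhd]
        ext u
        simp only [Set.mem_inter_iff, Set.mem_diff, Set.mem_singleton_iff, hS, hC,
          Set.mem_setOf_eq, hw]
        tauto
      have hwS : w ∈ S := ⟨hw, hwi⟩
      have hdd : (G.neighborSet w).ncard = (G.neighborSet v₀).ncard := by
        rw [nbhd, nbhd, hw,
          Set.ncard_diff_singleton_of_mem (show w ∈ {u | fcomp L₁ u = fcomp L₁ v₀} from hw),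
          Set.ncard_diff_singleton_of_mem
            (show v₀ ∈ {u | fcomp L₁ u = fcomp L₁ v₀} from rfl)]
      have hc1 := hcount v₀ i
      rw [if_neg hvi, e1] at hc1
      have hc2 := hcount w i
      rw [if_pos hwi, e2, hdd] at hc2
      have hS1 : 1 ≤ S.ncard := (Set.ncard_pos (Set.toFinite S)).2 ⟨w, hwS⟩
      rw [Set.ncard_diff_singleton_of_mem hwS] at hc2
      rw [Nat.cast_sub hS1] at hc2
      rw [hc1] at hc2
      push_cast at hc2 ⊢
      linarith
  -- α = 0
  have hα : α = 0 := by
    by_contra hα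
    have vs : ∃ v : (Fin (L₁ - 1) × Fin L₁) ⊕ Fin L₂, fcomp L₁ v < L₁ - 1 :=
      ⟨Sum.inl (⟨0, by omega⟩, ⟨0, by omega⟩), by simpa [fcomp] using by omega⟩
    obtain ⟨v, hv⟩ := vs
    obtain ⟨w, hw⟩ : ∃ w : (Fin (L₁ - 1) × Fin L₁) ⊕ Fin L₂, fcomp L₁ w = L₁ - 1 :=
      ⟨Sum.inr ⟨0, by omega⟩, rfl⟩
    have e1 := (key v).resolve_left hα
    have e2 := (key w).resolve_left hα
    rw [deg_small hv] at e1
    rw [deg_big hw] at e2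
    set d₁ : ℝ := ((L₁ - 1 : ℕ) : ℝ) with hd₁
    set d₂ : ℝ := ((L₂ - 1 : ℕ) : ℝ) with hd₂
    have hdlt : d₁ < d₂ := by
      rw [hd₁, hd₂]; exact_mod_cast (by omega : L₁ - 1 < L₂ - 1)
    have g1 : (α - β) * d₁ = 1 := by linear_combination e1
    have g2 : (α - β) * d₂ = 1 := by linear_combination e2
    have g3 : (α - β) * (d₂ - d₁) = 0 := by linear_combination g2 - g1
    rcases mul_eq_zero.1 g3 with h | h
    · rw [h] at g1; norm_num at g1
    · linarith
  -- monochromatic components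
  have hmono : ∀ v w, fcomp L₁ w = fcomp L₁ v → ∀ i, v ∈ P i → w ∈ P i := by
    intro v w hw i hvi
    obtain ⟨i', hwi', -⟩ := huniq w
    rcases eq_or_ne i' i with rfl | hne'
    · exact hwi'
    by_cases hwv : w = v
    · subst hwv; exact absurd (hdisj w i' i hwi' hvi) hne'
    have hvni' : v ∉ P i' := fun h => hne' (hdisj v i' i h hvi)
    have hc := hcount v i'
    rw [if_neg hvni', hα, zero_mul] at hc
    have hce : G.neighborSet v ∩ P i' = ∅ :=
      (Set.ncard_eq_zero (Set.toFinite _)).1 (by exact_mod_cast hc)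
    have hwmem : w ∈ G.neighborSet v ∩ P i' := by
      refine ⟨?_, hwi'⟩
      rw [nbhd]
      exact ⟨hw, hwv⟩
    rw [hce] at hwmem
    exact absurd hwmem (Set.notMem_empty w)
  -- injection from Fin k to Fin L₁
  choose vf hvf using hne
  have hf : Function.Injective (fun i : Fin k => (⟨fcomp L₁ (vf i), fcomp_lt h1 (vf i)⟩ : Fin L₁)) := by
    intro i i' hii
    have hcc : fcomp L₁ (vf i') = fcomp L₁ (vf i) := by
      simpa [Fin.ext_iff] using hii.symm
    have := hmono (vf i) (vf i') hcc i (hvf i)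
    exact hdisj (vf i') i i' this (hvf i')
  simpa using Fintype.card_le_of_injective _ hf

lemma fat_ge {L₁ L₂ : ℕ} (h1 : 1 < L₁) (h2 : L₁ < L₂) :
    ∃ P : Fin L₁ → Set ((Fin (L₁ - 1) × Fin L₁) ⊕ Fin L₂), ∃ α β : ℝ,
      IsFATColoring (cliquesUnionTwo L₁ L₂) L₁ P α β := by
  refine ⟨fun i => {v | fcomp L₁ v = i.1}, 0, 1, ?_, ?_, by norm_num, by norm_num,
    by norm_num, by norm_num, ?_⟩
  · intro i
    rcases lt_or_ge i.1 (L₁ - 1) with h | h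
    · exact ⟨Sum.inl (⟨i.1, h⟩, ⟨0, by omega⟩), rfl⟩
    · have : i.1 = L₁ - 1 := by omega
      exact ⟨Sum.inr ⟨0, by omega⟩, this.symm⟩
  · intro v
    refine ⟨⟨fcomp L₁ v, fcomp_lt h1 v⟩, rfl, ?_⟩
    intro j hj
    exact Fin.ext hj.symm
  · intro v i
    by_cases hv : v ∈ {w | fcomp L₁ w = i.1}
    · rw [if_pos hv]
      have : (cliquesUnionTwo L₁ L₂).neighborSet v ∩ {w | fcomp L₁ w = i.1}
          = (cliquesUnionTwo L₁ L₂).neighborSet v := by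
        apply Set.inter_eq_self_of_subset_left
        intro u hu
        rw [nbhd] at hu
        show fcomp L₁ u = i.1
        rw [hu.1, hv]
      rw [this, one_mul]
    · rw [if_neg hv]
      have : (cliquesUnionTwo L₁ L₂).neighborSet v ∩ {w | fcomp L₁ w = i.1} = ∅ := by
        ext u
        simp only [Set.mem_inter_iff, Set.mem_empty_iff_false, iff_false, not_and]
        intro hu hui
        rw [nbhd] at hu
        exact hv (show fcomp L₁ v = i.1 by rw [← hu.1]; exact hui)
      rw [this]
      simp

lemma chrom_eq {L₁ L₂ : ℕ} (h1 : 1 < L₁) (h2 : L₁ < L₂) :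
    (cliquesUnionTwo L₁ L₂).chromaticNumber = (L₂ : ℕ∞) := by
  apply le_antisymm
  · have hcol : (cliquesUnionTwo L₁ L₂).Colorable L₂ := by
      refine ⟨Coloring.mk (fun v => match v with
        | Sum.inl x => Fin.castLE h2.le x.2
        | Sum.inr x => x) ?_⟩
      rintro (x | x) (y | y) h
      · exact fun he => h.2 (Fin.castLE_injective _ he)
      · exact h.elim
      · exact h.elim
      · exact h
    exact hcol.chromaticNumber_le
  · have emb : (⊤ : SimpleGraph (Fin L₂)) ↪g (cliquesUnionTwo L₁ L₂) :=
      ⟨⟨Sum.inr, Sum.inr_injective⟩, Iff.rfl⟩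
    have := chromaticNumber_mono_of_hom emb.toHom
    rwa [chromaticNumber_top, Fintype.card_fin] at this

theorem fat_cliques_union_two (L₁ L₂ : ℕ) (h1 : 1 < L₁) (h2 : L₁ < L₂) :
    (cliquesUnionTwo L₁ L₂).chromaticNumber = (L₂ : ℕ∞) ∧
    fatChromaticNumber (cliquesUnionTwo L₁ L₂) = L₁ := by
  refine ⟨chrom_eq h1 h2, ?_⟩
  have hub : ∀ k ∈ {k : ℕ | ∃ P : Fin k → Set ((Fin (L₁ - 1) × Fin L₁) ⊕ Fin L₂),
      ∃ α β : ℝ, IsFATColoring (cliquesUnionTwo L₁ L₂) k P α β}, k ≤ L₁ := by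
    rintro k ⟨P, α, β, hF⟩
    exact fat_le h1 h2 k P α β hF
  have hmem : L₁ ∈ {k : ℕ | ∃ P : Fin k → Set ((Fin (L₁ - 1) × Fin L₁) ⊕ Fin L₂),
      ∃ α β : ℝ, IsFATColoring (cliquesUnionTwo L₁ L₂) k P α β} := fat_ge h1 h2
  exact le_antisymm (csSup_le ⟨L₁, hmem⟩ hub) (le_csSup ⟨L₁, hub⟩ hmem)
end

section
/- For every connected graph G with minimum degree δ, the FAT chromatic number of G is at most δ + 1. -/
open SimpleGraph
open scoped Classical

/-!
Take a FAT `k`-coloring with `k ≥ 2`. Connectivity gives an edge between two different classes,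
so `α · deg u ≥ 1` at one of its ends and hence `α > 0`. Then each vertex `v` has exactly
`α · deg v > 0` neighbors in every class other than its own, so all `k` classes meet the closed
neighborhood of `v`, whence `k ≤ deg v + 1`; take `v` of minimum degree.
-/

theorem SimpleGraph.ncard_neighborSet_eq_degree {V : Type*} (G : SimpleGraph V) (v : V)
    [Fintype (G.neighborSet v)] : (G.neighborSet v).ncard = G.degree v := by
  rw [← Nat.card_coe_set_eq, Nat.card_eq_fintype_card, card_neighborSet_eq_degree]

namespace IsFATColoring

variable {V : Type*} {G : SimpleGraph V} {k : ℕ} {P : Fin k → Set V} {α β : ℝ}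

theorem eq_of_mem (hP : IsFATColoring G k P α β) {v : V} {i j : Fin k} (hi : v ∈ P i)
    (hj : v ∈ P j) : i = j :=
  (hP.2.1 v).unique hi hj

theorem ncard_neighborSet_inter_of_notMem (hP : IsFATColoring G k P α β) {v : V} {i : Fin k}
    (hv : v ∉ P i) : ((G.neighborSet v ∩ P i).ncard : ℝ) = α * (G.neighborSet v).ncard := by
  rw [hP.2.2.2.2.2.2 v i, if_neg hv]

theorem exists_mem_notMem (hP : IsFATColoring G k P α β) (hk : 1 < k) :
    ∃ i u w, u ∈ P i ∧ w ∉ P i := by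
  obtain ⟨u, hu⟩ := hP.1 ⟨0, by omega⟩
  obtain ⟨w, hw⟩ := hP.1 ⟨1, hk⟩
  exact ⟨_, u, w, hu, fun hw' => absurd (hP.eq_of_mem hw hw') (by simp)⟩

theorem nontrivial (hP : IsFATColoring G k P α β) (hk : 1 < k) : Nontrivial V := by
  obtain ⟨i, u, w, hu, hw⟩ := hP.exists_mem_notMem hk
  exact ⟨u, w, by rintro rfl; exact hw hu⟩

theorem alpha_pos [G.LocallyFinite] (hP : IsFATColoring G k P α β) (hG : G.Preconnected)
    (hk : 1 < k) : 0 < α := by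
  obtain ⟨i, u, w, hu, hw⟩ := hP.exists_mem_notMem hk
  obtain ⟨d, -, hx, hy⟩ := (hG u w).some.exists_boundary_dart (P i) hu hw
  obtain ⟨j, hyj⟩ := (hP.2.1 d.snd).exists
  have hxj : d.fst ∉ P j := fun hxj => hy (hP.eq_of_mem hx hxj ▸ hyj)
  have hcross : 0 < (G.neighborSet d.fst ∩ P j).ncard :=
    (Set.ncard_pos ((G.neighborSet d.fst).toFinite.inter_of_left _)).2 ⟨d.snd, d.adj, hyj⟩
  have : (0 : ℝ) < α * (G.neighborSet d.fst).ncard := by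
    rw [← hP.ncard_neighborSet_inter_of_notMem hxj]
    exact_mod_cast hcross
  exact pos_of_mul_pos_left this (Nat.cast_nonneg _)

theorem exists_mem_insert_neighborSet (hP : IsFATColoring G k P α β) (hα : 0 < α) {v : V}
    (hv : 0 < (G.neighborSet v).ncard) (i : Fin k) :
    ∃ w ∈ insert v (G.neighborSet v), w ∈ P i := by
  by_cases hvi : v ∈ P i
  · exact ⟨v, Set.mem_insert v _, hvi⟩
  have hpos : (0 : ℝ) < (G.neighborSet v ∩ P i).ncard := by
    rw [hP.ncard_neighborSet_inter_of_notMem hvi]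
    exact mul_pos hα (by exact_mod_cast hv)
  obtain ⟨w, hw, hwi⟩ := Set.nonempty_of_ncard_ne_zero (by exact_mod_cast hpos.ne')
  exact ⟨w, Set.mem_insert_of_mem v hw, hwi⟩

theorem le_ncard_neighborSet_add_one (hP : IsFATColoring G k P α β) (hα : 0 < α) {v : V}
    (hv : 0 < (G.neighborSet v).ncard) : k ≤ (G.neighborSet v).ncard + 1 := by
  choose w hw hwP using hP.exists_mem_insert_neighborSet hα hv
  have hfin := Set.finite_of_ncard_pos hv
  calc k = (Set.univ : Set (Fin k)).ncard := by simp
    _ ≤ (insert v (G.neighborSet v)).ncard :=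
      Set.ncard_le_ncard_of_injOn w (fun i _ => hw i)
        (fun i _ j _ hij => hP.eq_of_mem (hwP i) (hij ▸ hwP j)) (hfin.insert v)
    _ = (G.neighborSet v).ncard + 1 := Set.ncard_insert_of_notMem G.notMem_neighborSet_self hfin

end IsFATColoring

theorem fat_le_minDegree_succ {V : Type*} [Fintype V] (G : SimpleGraph V)
    [DecidableRel G.Adj] (h : G.Connected) :
    fatChromaticNumber G ≤ G.minDegree + 1 := by
  refine csSup_le' fun k ⟨P, α, β, hP⟩ => ?_
  rcases le_or_gt k 1 with hk | hk
  · omega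
  have := hP.nontrivial hk
  obtain ⟨v, hv⟩ := G.exists_minimal_degree_vertex
  have hv_pos : 0 < (G.neighborSet v).ncard := by
    rw [G.ncard_neighborSet_eq_degree]
    exact h.preconnected.degree_pos_of_nontrivial v
  calc k ≤ (G.neighborSet v).ncard + 1 :=
        hP.le_ncard_neighborSet_add_one (hP.alpha_pos h.preconnected hk) hv_pos
    _ = G.minDegree + 1 := by rw [G.ncard_neighborSet_eq_degree, hv]
end

section
/- Let n ≥ 5 be odd and let G be the graph obtained from the complete graph Kₙ on vertices w₁,...,wₙ by attaching to each wᵢ exactly (n−1)/2 pendant triangles wᵢu⁽ⁱ⁾ⱼv⁽ⁱ⁾ⱼ (for j = 1,...,(n−1)/2), where the u's and v's are all new distinct vertices. Then the partition with classes S₁ = {w₁,...,wₙ} and S₂ = all triangle vertices u⁽ⁱ⁾ⱼ, v⁽ⁱ⁾ⱼ is a FAT 2-coloring of G with parameters α = β = 1/2. -/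
open SimpleGraph
open scoped Classical

/-- The graph obtained from `Kₙ` on vertices `w₁,...,wₙ` (the left summands)
by attaching to each `wᵢ` exactly `(n-1)/2` pendant triangles: the triangle
vertices are triples `(i, j, b)` with `b : Bool` distinguishing the two new
vertices `u⁽ⁱ⁾ⱼ`, `v⁽ⁱ⁾ⱼ` of the `j`-th triangle at `wᵢ`. -/
def pendantTriangles (n : ℕ) :
    SimpleGraph (Fin n ⊕ (Fin n × Fin ((n - 1) / 2) × Bool)) where
  Adj a b :=
    match a, b with
    | Sum.inl i, Sum.inl j => i ≠ j
    | Sum.inl i, Sum.inr t => i = t.1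
    | Sum.inr t, Sum.inl i => t.1 = i
    | Sum.inr t, Sum.inr s => t.1 = s.1 ∧ t.2.1 = s.2.1 ∧ t.2.2 ≠ s.2.2
  symm := by
    constructor
    rintro (i | t) (j | s) h
    · exact h.symm
    · exact h.symm
    · exact h.symm
    · exact ⟨h.1.symm, h.2.1.symm, h.2.2.symm⟩
  loopless := by
    constructor
    rintro (i | t) h
    · exact h rfl
    · exact h.2.2 rfl

variable (n : ℕ)

lemma pt_adj_inl_inl (i j : Fin n) : (pendantTriangles n).Adj (Sum.inl i) (Sum.inl j) ↔ i ≠ j := Iff.rfl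
lemma pt_adj_inl_inr (i : Fin n) (t) : (pendantTriangles n).Adj (Sum.inl i) (Sum.inr t) ↔ i = t.1 := Iff.rfl
lemma pt_adj_inr_inl (i : Fin n) (t) : (pendantTriangles n).Adj (Sum.inr t) (Sum.inl i) ↔ t.1 = i := Iff.rfl
lemma pt_adj_inr_inr (t s) : (pendantTriangles n).Adj (Sum.inr t) (Sum.inr s) ↔ t.1 = s.1 ∧ t.2.1 = s.2.1 ∧ t.2.2 ≠ s.2.2 := Iff.rfl

lemma ns_inl_inl (i : Fin n) :
    (pendantTriangles n).neighborSet (Sum.inl i) ∩ Set.range Sum.inl = Sum.inl '' {i}ᶜ := by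
  ext (j | t)
  · simp [pt_adj_inl_inl, neighborSet, ne_comm]
  · simp [neighborSet]

lemma ns_inl_inr (i : Fin n) :
    (pendantTriangles n).neighborSet (Sum.inl i) ∩ Set.range Sum.inr
      = Sum.inr '' {t : Fin n × Fin ((n-1)/2) × Bool | t.1 = i} := by
  ext (j | t)
  · simp [neighborSet]
  · simp [neighborSet, pt_adj_inl_inr, eq_comm]

lemma ns_inr_inl (t : Fin n × Fin ((n-1)/2) × Bool) :
    (pendantTriangles n).neighborSet (Sum.inr t) ∩ Set.range Sum.inl = {Sum.inl t.1} := by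
  ext (j | s)
  · simp [neighborSet, pt_adj_inr_inl, eq_comm]
  · simp [neighborSet]

lemma ns_inr_inr (t : Fin n × Fin ((n-1)/2) × Bool) :
    (pendantTriangles n).neighborSet (Sum.inr t) ∩ Set.range Sum.inr = {Sum.inr (t.1, t.2.1, !t.2.2)} := by
  ext (j | s)
  · simp [neighborSet]
  · simp only [neighborSet, Set.mem_inter_iff, Set.mem_setOf_eq, pt_adj_inr_inr,
      Set.mem_range, Set.mem_singleton_iff, Sum.inr.injEq]
    constructor
    · rintro ⟨⟨h1, h2, h3⟩, -⟩
      obtain ⟨s1, s2, s3⟩ := s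
      simp_all
      cases s3 <;> cases ht : t.2.2 <;> simp_all
    · rintro rfl
      exact ⟨⟨rfl, rfl, by simp⟩, ⟨_, rfl⟩⟩

lemma card_compl_singleton (i : Fin n) : ({i}ᶜ : Set (Fin n)).ncard = n - 1 := by
  rw [Set.ncard_eq_toFinset_card']
  simp [Finset.card_compl]

lemma card_fiber (i : Fin n) : {t : Fin n × Fin ((n-1)/2) × Bool | t.1 = i}.ncard
    = (n-1)/2 * 2 := by
  have : {t : Fin n × Fin ((n-1)/2) × Bool | t.1 = i} = Prod.mk i '' Set.univ := by
    ext ⟨a, b⟩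
    simp [eq_comm]
  rw [this, Set.ncard_image_of_injective _ (fun a b h => (Prod.mk.injEq _ _ _ _ ▸ h).2)]
  rw [Set.ncard_univ]
  simp [Nat.card_eq_fintype_card, Nat.mul_comm]

lemma ns_total {A B : Type*} [Fintype A] [Fintype B] (G : SimpleGraph (A ⊕ B)) (v) :
    (G.neighborSet v).ncard = (G.neighborSet v ∩ Set.range Sum.inl).ncard
      + (G.neighborSet v ∩ Set.range Sum.inr).ncard := by
  rw [← Set.ncard_union_eq (Set.disjoint_of_subset Set.inter_subset_right
      Set.inter_subset_right (Set.isCompl_range_inl_range_inr.disjoint))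
      (Set.toFinite _) (Set.toFinite _),
    ← Set.inter_union_distrib_left, Set.range_inl_union_range_inr, Set.inter_univ]

theorem fat_pendant_triangles_coloring (n : ℕ) (hodd : Odd n) (hn : 5 ≤ n) :
    IsFATColoring (pendantTriangles n) 2
      (fun i => if i = 0 then Set.range Sum.inl else Set.range Sum.inr)
      (1 / 2) (1 / 2) := by
  have hne : n - 1 = (n-1)/2 * 2 := by
    obtain ⟨k, rfl⟩ := hodd; omega
  refine ⟨?_, ?_, by norm_num, by norm_num, by norm_num, by norm_num, ?_⟩
  · intro i
    fin_cases i
    · exact ⟨Sum.inl ⟨0, by omega⟩, by simp⟩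
    · refine ⟨Sum.inr (⟨0, by omega⟩, ⟨0, by omega⟩, true), ?_⟩
      simp only [Fin.mk_one]
      rw [if_neg one_ne_zero]
      exact ⟨_, rfl⟩
  · rintro (i | t)
    · refine ⟨0, ⟨i, rfl⟩, fun j hj => ?_⟩
      fin_cases j
      · rfl
      · simp only [Fin.mk_one] at hj ⊢
        rw [if_neg one_ne_zero] at hj
        obtain ⟨t, ht⟩ := hj
        cases ht
    · refine ⟨1, ?_, fun j hj => ?_⟩
      · simp only [Fin.isValue]
        rw [if_neg one_ne_zero]
        exact ⟨t, rfl⟩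
      · fin_cases j
        · simp only [Fin.zero_eta, if_pos rfl] at hj
          obtain ⟨s, hs⟩ := hj
          cases hs
        · rfl
  · rintro (i | t) j <;> fin_cases j <;>
      simp only [Fin.zero_eta, Fin.mk_one, if_pos rfl, if_neg one_ne_zero, if_true]
    · rw [ns_inl_inl, ns_total, ns_inl_inl, ns_inl_inr,
        Set.ncard_image_of_injective _ Sum.inl_injective,
        Set.ncard_image_of_injective _ Sum.inr_injective,
        card_compl_singleton, card_fiber]
      rw [if_pos ⟨i, rfl⟩]
      push_cast [← hne, Nat.cast_sub (by omega : 1 ≤ n)]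
      ring
    · rw [ns_inl_inr, ns_total, ns_inl_inl, ns_inl_inr,
        Set.ncard_image_of_injective _ Sum.inl_injective,
        Set.ncard_image_of_injective _ Sum.inr_injective,
        card_compl_singleton, card_fiber]
      rw [if_neg (by simp)]
      push_cast [← hne, Nat.cast_sub (by omega : 1 ≤ n)]
      ring
    · rw [ns_inr_inl, ns_total _, ns_inr_inl, ns_inr_inr,
        Set.ncard_singleton, Set.ncard_singleton]
      rw [if_neg (by simp)]
      norm_num
    · rw [ns_inr_inr, ns_total _, ns_inr_inl, ns_inr_inr,
        Set.ncard_singleton, Set.ncard_singleton]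
      rw [if_pos ⟨_, rfl⟩]
      norm_num
end

section
/- Let n ≥ 5 be odd and let G be the graph obtained from Kₙ on vertices w₁,...,wₙ by attaching to each wᵢ exactly (n−1)/2 pendant triangles on new vertices. Then χ(G) = n and χ^FAT(G) = 2. -/
open SimpleGraph
open scoped Classical

lemma pt_nbhd_inr (n : ℕ) (t : Fin n × Fin ((n-1)/2) × Bool) :
    (pendantTriangles n).neighborSet (Sum.inr t) =
      {Sum.inl t.1, Sum.inr (t.1, t.2.1, !t.2.2)} := by
  ext x
  cases x with
  | inl i =>
      simp only [mem_neighborSet, pendantTriangles, Set.mem_insert_iff, Set.mem_singleton_iff]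
      constructor
      · rintro rfl; left; rfl
      · rintro (h | h) <;> simp_all
  | inr s =>
      simp only [mem_neighborSet, pendantTriangles, Set.mem_insert_iff, Set.mem_singleton_iff]
      obtain ⟨s1, s2, s3⟩ := s
      obtain ⟨t1, t2, t3⟩ := t
      constructor
      · rintro ⟨h1, h2, h3⟩
        right
        simp only at h1 h2 h3 ⊢
        cases h1; cases h2
        cases t3 <;> cases s3 <;> simp_all
      · rintro (h | h)
        · simp_all
        · rw [Sum.inr.injEq] at h
          cases h
          exact ⟨rfl, rfl, by cases t3 <;> simp⟩


lemma pt_nbhd_inl (n : ℕ) (i : Fin n) :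
    (pendantTriangles n).neighborSet (Sum.inl i) =
      (Sum.inl '' {j | j ≠ i}) ∪ (Sum.inr '' {t | t.1 = i}) := by
  ext x
  cases x with
  | inl j =>
      simp only [mem_neighborSet, pendantTriangles, Set.mem_union, Set.mem_image,
        Set.mem_setOf_eq]
      constructor
      · intro h; left; exact ⟨j, fun hj => h hj.symm, rfl⟩
      · rintro (⟨a, ha, h⟩ | ⟨a, ha, h⟩)
        · cases h; exact fun hij => ha hij.symm
        · cases h
  | inr t =>
      simp only [mem_neighborSet, pendantTriangles, Set.mem_union, Set.mem_image,
        Set.mem_setOf_eq]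
      constructor
      · intro h; right; exact ⟨t, h.symm, rfl⟩
      · rintro (⟨a, ha, h⟩ | ⟨a, ha, h⟩)
        · cases h
        · cases h; exact ha.symm

lemma ncard_ne (n : ℕ) (i : Fin n) : ({j : Fin n | j ≠ i}).ncard = n - 1 := by
  rw [← Nat.card_coe_set_eq, Nat.card_eq_fintype_card]
  have : Fintype.card {j : Fin n // j ≠ i} = Fintype.card (Fin n) - Fintype.card {j : Fin n // j = i} :=
    Fintype.card_subtype_compl _
  simp only [Set.coe_setOf]
  rw [this]
  simp [Fintype.card_subtype_eq]


lemma ncard_fst_eq (n m : ℕ) (i : Fin n) :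
    ({t : Fin n × Fin m × Bool | t.1 = i}).ncard = 2 * m := by
  have he : {t : Fin n × Fin m × Bool | t.1 = i} =
      Set.range (fun p : Fin m × Bool => ((i, p.1, p.2) : Fin n × Fin m × Bool)) := by
    ext ⟨a, b, c⟩
    simp only [Set.mem_setOf_eq, Set.mem_range, Prod.mk.injEq]
    constructor
    · rintro rfl; exact ⟨(b, c), rfl, rfl, rfl⟩
    · rintro ⟨p, rfl, rfl, rfl⟩; rfl
  rw [he, ← Nat.card_coe_set_eq,
    Nat.card_range_of_injective (f := fun p : Fin m × Bool => ((i, p.1, p.2) : Fin n × Fin m × Bool))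
      (by intro p q h; simp only [Prod.mk.injEq] at h; exact Prod.ext h.2.1 h.2.2)]
  simp [Nat.card_eq_fintype_card, Nat.mul_comm]

def ptColNat {n m : ℕ} (t : Fin n × Fin m × Bool) : ℕ :=
  if t.2.2 then (if t.1.val = 0 then 1 else 0) else (if t.1.val ≤ 1 then 2 else 1)

lemma ptColNat_lt {n m : ℕ} (hn : 3 ≤ n) (t : Fin n × Fin m × Bool) : ptColNat t < n := by
  unfold ptColNat; split_ifs <;> omega

lemma pt_chrom (n : ℕ) (hn : 3 ≤ n) :
    (pendantTriangles n).chromaticNumber = (n : ℕ∞) := by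
  have hcol : (pendantTriangles n).Colorable n := by
    refine ⟨Coloring.mk (fun x => match x with
      | Sum.inl i => i
      | Sum.inr t => ⟨ptColNat t, ptColNat_lt hn t⟩) ?_⟩
    rintro (i | t) (j | s) hadj
    · exact fun h => hadj (by simpa using h)
    · have hit : i = s.1 := hadj
      subst hit
      intro h
      rw [Fin.ext_iff] at h
      simp only [ptColNat] at h
      split_ifs at h <;> omega
    · have hit : t.1 = j := hadj
      subst hit
      intro h
      rw [Fin.ext_iff] at h
      simp only [ptColNat] at h
      split_ifs at h <;> omega
    · obtain ⟨h1, h2, h3⟩ := hadj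
      intro h
      rw [Fin.ext_iff] at h
      simp only [ptColNat, h1] at h
      cases ht : t.2.2 <;> cases hs : s.2.2 <;> rw [ht, hs] at h <;> simp only [] at h
      · exact h3 (ht.trans hs.symm)
      · simp only [if_neg (Bool.false_ne_true), if_pos rfl] at h
        split_ifs at h <;> omega
      · simp only [if_neg (Bool.false_ne_true), if_pos rfl] at h
        split_ifs at h <;> omega
      · exact h3 (ht.trans hs.symm)
  have hub : (pendantTriangles n).chromaticNumber ≤ (n : ℕ∞) :=
    hcol.chromaticNumber_le
  have hlb : (n : ℕ∞) ≤ (pendantTriangles n).chromaticNumber := by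
    have hclique : (pendantTriangles n).IsClique
        (↑(Finset.univ.map ⟨Sum.inl, Sum.inl_injective⟩ :
          Finset (Fin n ⊕ (Fin n × Fin ((n-1)/2) × Bool)))) := by
      intro a ha b hb hne
      simp only [Finset.coe_map, Finset.coe_univ, Set.image_univ, Set.mem_range] at ha hb
      obtain ⟨i, rfl⟩ := ha
      obtain ⟨j, rfl⟩ := hb
      exact fun h => hne (by rw [h])
    have := hclique.card_le_chromaticNumber
    simpa using this
  exact le_antisymm hub hlb

lemma no_fat (n : ℕ) (hn : 5 ≤ n) {k : ℕ} (hk : 3 ≤ k)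
    (P : Fin k → Set (Fin n ⊕ (Fin n × Fin ((n-1)/2) × Bool))) (α β : ℝ)
    (h : IsFATColoring (pendantTriangles n) k P α β) : False := by
  obtain ⟨hne, huni, hα0, hα1, hβ0, hβ1, hcnt⟩ := h
  have hn0 : 0 < n := by omega
  have hcex : ∀ v, ∃ i, v ∈ P i := fun v => (huni v).exists
  choose c hc using hcex
  have hcu : ∀ v i, v ∈ P i → i = c v := fun v i hv => (huni v).unique hv (hc v)
  rcases hα0.eq_or_lt with hα | hα
  · -- α = 0 case
    have hsame : ∀ v w, (pendantTriangles n).Adj v w → c w = c v := by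
      intro v w hadj
      by_contra hne'
      have hvni : v ∉ P (c w) := fun hv => hne' (hcu v (c w) hv)
      have hct := hcnt v (c w)
      rw [if_neg hvni, ← hα, zero_mul] at hct
      have h0 : ((pendantTriangles n).neighborSet v ∩ P (c w)).ncard = 0 := by exact_mod_cast hct
      rw [Set.ncard_eq_zero (Set.toFinite _)] at h0
      exact absurd h0 (Set.nonempty_iff_ne_empty.1 ⟨w, hadj, hc w⟩)
    have hinl : ∀ i : Fin n, c (Sum.inl i) = c (Sum.inl (⟨0, hn0⟩ : Fin n)) := by
      intro i
      by_cases h0 : i = (⟨0, hn0⟩ : Fin n)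
      · rw [h0]
      · exact hsame (Sum.inl ⟨0, hn0⟩) (Sum.inl i) (fun he => h0 he.symm)
    have hall : ∀ v, c v = c (Sum.inl (⟨0, hn0⟩ : Fin n)) := by
      intro v
      cases v with
      | inl i => exact hinl i
      | inr t =>
          exact (hsame (Sum.inl t.1) (Sum.inr t) rfl).trans (hinl t.1)
    obtain ⟨j, hj⟩ : ∃ j : Fin k, j ≠ c (Sum.inl (⟨0, hn0⟩ : Fin n)) := by
      refine ⟨if c (Sum.inl (⟨0, hn0⟩ : Fin n)) = ⟨0, by omega⟩ then ⟨1, by omega⟩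
        else ⟨0, by omega⟩, ?_⟩
      split_ifs with hsplit
      · rw [hsplit]; intro hx; rw [Fin.ext_iff] at hx; simp at hx
      · intro hx; exact hsplit hx.symm
    obtain ⟨x, hx⟩ := hne j
    exact hj ((hcu x j hx).trans (hall x))
  · -- α > 0 case
    have hm2 : 0 < (n-1)/2 := by omega
    set a : Fin n ⊕ (Fin n × Fin ((n-1)/2) × Bool) := Sum.inl ⟨0, hn0⟩ with ha
    set u : Fin n ⊕ (Fin n × Fin ((n-1)/2) × Bool) :=
      Sum.inr (⟨0, hn0⟩, ⟨0, hm2⟩, false) with hu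
    set b : Fin n ⊕ (Fin n × Fin ((n-1)/2) × Bool) :=
      Sum.inr (⟨0, hn0⟩, ⟨0, hm2⟩, true) with hb
    have hNu : (pendantTriangles n).neighborSet u = {a, b} := by
      rw [hu, pt_nbhd_inr]; rfl
    have hab : a ≠ b := by rw [ha, hb]; exact fun h => by cases h
    have hNcard : ((pendantTriangles n).neighborSet u).ncard = 2 := by
      rw [hNu]; exact Set.ncard_pair hab
    have hnonempty : ∀ i : Fin k, i ≠ c u →
        ((pendantTriangles n).neighborSet u ∩ P i).Nonempty := by
      intro i hi
      have hni : u ∉ P i := fun hmem => hi (hcu u i hmem)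
      have hct := hcnt u i
      rw [if_neg hni, hNcard] at hct
      have hpos : (0:ℝ) < α * (2:ℕ) := by
        have : (0:ℝ) < (2:ℕ) := by norm_num
        exact mul_pos hα this
      rw [← hct] at hpos
      exact Set.nonempty_of_ncard_ne_zero (by exact_mod_cast hpos.ne')
    have hNuCard : Nat.card ((pendantTriangles n).neighborSet u) = 2 := by
      rw [Nat.card_coe_set_eq, hNcard]
    have hk1 : k - 1 ≤ 2 := by
      have hinj : Function.Injective
          (fun i : {i : Fin k // i ≠ c u} =>
            (⟨(hnonempty i.1 i.2).choose, (hnonempty i.1 i.2).choose_spec.1⟩ :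
              ((pendantTriangles n).neighborSet u : Set _))) := by
        intro i j hij
        have heq : (hnonempty i.1 i.2).choose = (hnonempty j.1 j.2).choose :=
          congrArg Subtype.val hij
        apply Subtype.ext
        rw [hcu _ _ (hnonempty i.1 i.2).choose_spec.2,
          hcu _ _ (hnonempty j.1 j.2).choose_spec.2, heq]
      have hle := Nat.card_le_card_of_injective _ hinj
      rw [hNuCard, Nat.card_eq_fintype_card] at hle
      have : Fintype.card {i : Fin k // i ≠ c u} = k - 1 := by
        simp [Fintype.card_subtype_compl, Fintype.card_subtype_eq]
      omega
    have hβz : β = 0 := by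
      by_contra hβne
      have hβpos : 0 < β := hβ0.lt_of_ne (Ne.symm hβne)
      have hall : ∀ i : Fin k, ((pendantTriangles n).neighborSet u ∩ P i).Nonempty := by
        intro i
        by_cases hi : i = c u
        · subst hi
          have hct := hcnt u (c u)
          rw [if_pos (hc u), hNcard] at hct
          have hpos : (0:ℝ) < β * (2:ℕ) := by
            have : (0:ℝ) < (2:ℕ) := by norm_num
            exact mul_pos hβpos this
          rw [← hct] at hpos
          exact Set.nonempty_of_ncard_ne_zero (by exact_mod_cast hpos.ne')
        · exact hnonempty i hi
      have hinj : Function.Injective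
          (fun i : Fin k =>
            (⟨(hall i).choose, (hall i).choose_spec.1⟩ :
              ((pendantTriangles n).neighborSet u : Set _))) := by
        intro i j hij
        have heq : (hall i).choose = (hall j).choose := congrArg Subtype.val hij
        rw [hcu _ _ (hall i).choose_spec.2, hcu _ _ (hall j).choose_spec.2, heq]
      have hle := Nat.card_le_card_of_injective _ hinj
      rw [hNuCard, Nat.card_eq_fintype_card, Fintype.card_fin] at hle
      omega
    have hinj : Function.Injective (fun i : Fin n => c (Sum.inl i)) := by
      intro i j hij
      by_contra hne'
      have hadj : (pendantTriangles n).Adj (Sum.inl i) (Sum.inl j) := hne'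
      have hmem : Sum.inl j ∈
          (pendantTriangles n).neighborSet (Sum.inl i) ∩ P (c (Sum.inl i)) := by
        refine ⟨hadj, ?_⟩
        have hij' : c (Sum.inl i) = c (Sum.inl j) := hij
        have := hc (Sum.inl j)
        rwa [← hij'] at this
      have hct := hcnt (Sum.inl i) (c (Sum.inl i))
      rw [if_pos (hc _), hβz, zero_mul] at hct
      have h0 : ((pendantTriangles n).neighborSet (Sum.inl i) ∩ P (c (Sum.inl i))).ncard = 0 := by
        exact_mod_cast hct
      rw [Set.ncard_eq_zero (Set.toFinite _)] at h0
      rw [h0] at hmem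
      exact hmem
    have hle := Nat.card_le_card_of_injective _ hinj
    rw [Nat.card_eq_fintype_card, Nat.card_eq_fintype_card, Fintype.card_fin,
      Fintype.card_fin] at hle
    omega

lemma pt_fat2 (n : ℕ) (hodd : Odd n) (hn : 5 ≤ n) :
    IsFATColoring (pendantTriangles n) 2
      (fun i => if i = 0 then Set.range Sum.inl else Set.range Sum.inr)
      (1/2) (1/2) := by
  obtain ⟨K, hK⟩ := hodd
  have hn0 : 0 < n := by omega
  have hm0 : 0 < (n-1)/2 := by omega
  have hm : (n-1)/2 * 2 = n - 1 := by omega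
  have hdisj : ∀ i0 : Fin n, Disjoint ((Sum.inl '' {j | j ≠ i0}) :
        Set (Fin n ⊕ (Fin n × Fin ((n-1)/2) × Bool)))
      (Sum.inr '' {t | t.1 = i0}) := by
    intro i0
    rw [Set.disjoint_left]
    rintro x ⟨j, _, rfl⟩ ⟨t, _, ht⟩
    cases ht
  have hA : ∀ i0 : Fin n, (pendantTriangles n).neighborSet (Sum.inl i0) ∩ Set.range Sum.inl
      = Sum.inl '' {j | j ≠ i0} := by
    intro i0
    rw [pt_nbhd_inl]
    ext x
    constructor
    · rintro ⟨(h | h), hx⟩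
      · exact h
      · obtain ⟨y, hy⟩ := hx
        obtain ⟨t, _, hteq⟩ := h
        rw [← hteq] at hy
        cases hy
    · intro hx
      refine ⟨Or.inl hx, ?_⟩
      obtain ⟨j, _, rfl⟩ := hx
      exact ⟨j, rfl⟩
  have hB : ∀ i0 : Fin n, (pendantTriangles n).neighborSet (Sum.inl i0) ∩ Set.range Sum.inr
      = Sum.inr '' {t | t.1 = i0} := by
    intro i0
    rw [pt_nbhd_inl]
    ext x
    constructor
    · rintro ⟨(h | h), hx⟩
      · obtain ⟨y, hy⟩ := hx
        obtain ⟨t, _, hteq⟩ := h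
        rw [← hteq] at hy
        cases hy
      · exact h
    · intro hx
      refine ⟨Or.inr hx, ?_⟩
      obtain ⟨t, _, rfl⟩ := hx
      exact ⟨t, rfl⟩
  have hAc : ∀ i0 : Fin n, ((Sum.inl '' {j | j ≠ i0}) :
      Set (Fin n ⊕ (Fin n × Fin ((n-1)/2) × Bool))).ncard = n - 1 := by
    intro i0
    rw [Set.ncard_image_of_injective _ Sum.inl_injective, ncard_ne]
  have hBc : ∀ i0 : Fin n, ((Sum.inr '' {t | t.1 = i0}) :
      Set (Fin n ⊕ (Fin n × Fin ((n-1)/2) × Bool))).ncard = n - 1 := by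
    intro i0
    rw [Set.ncard_image_of_injective _ Sum.inr_injective, ncard_fst_eq]
    omega
  have hNc : ∀ i0 : Fin n,
      ((pendantTriangles n).neighborSet (Sum.inl i0)).ncard = (n-1) + (n-1) := by
    intro i0
    rw [pt_nbhd_inl, Set.ncard_union_eq (hdisj i0) (Set.toFinite _) (Set.toFinite _),
      hAc i0, hBc i0]
  have hC : ∀ t : Fin n × Fin ((n-1)/2) × Bool,
      (pendantTriangles n).neighborSet (Sum.inr t) ∩ Set.range Sum.inl
        = {Sum.inl t.1} := by
    intro t
    rw [pt_nbhd_inr]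
    ext x
    simp only [Set.mem_inter_iff, Set.mem_insert_iff, Set.mem_singleton_iff, Set.mem_range]
    constructor
    · rintro ⟨(h | h), hx⟩
      · exact h
      · obtain ⟨y, hy⟩ := hx
        rw [h] at hy
        cases hy
    · rintro rfl
      exact ⟨Or.inl rfl, ⟨t.1, rfl⟩⟩
  have hD : ∀ t : Fin n × Fin ((n-1)/2) × Bool,
      (pendantTriangles n).neighborSet (Sum.inr t) ∩ Set.range Sum.inr
        = {Sum.inr (t.1, t.2.1, !t.2.2)} := by
    intro t
    rw [pt_nbhd_inr]
    ext x
    simp only [Set.mem_inter_iff, Set.mem_insert_iff, Set.mem_singleton_iff, Set.mem_range]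
    constructor
    · rintro ⟨(h | h), hx⟩
      · obtain ⟨y, hy⟩ := hx
        rw [h] at hy
        cases hy
      · exact h
    · rintro rfl
      exact ⟨Or.inr rfl, ⟨_, rfl⟩⟩
  have hNc2 : ∀ t : Fin n × Fin ((n-1)/2) × Bool,
      ((pendantTriangles n).neighborSet (Sum.inr t)).ncard = 2 := by
    intro t
    rw [pt_nbhd_inr]
    exact Set.ncard_pair (fun h => by cases h)
  refine ⟨?_, ?_, by norm_num, by norm_num, by norm_num, by norm_num, ?_⟩
  · intro i
    show (if i = 0 then Set.range Sum.inl else Set.range Sum.inr).Nonempty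
    by_cases hi : i = 0
    · rw [if_pos hi]
      exact ⟨Sum.inl ⟨0, hn0⟩, ⟨⟨0, hn0⟩, rfl⟩⟩
    · rw [if_neg hi]
      exact ⟨Sum.inr (⟨0, hn0⟩, ⟨0, hm0⟩, false), ⟨(⟨0, hn0⟩, ⟨0, hm0⟩, false), rfl⟩⟩
  · intro v
    cases v with
    | inl i =>
        refine ⟨0, ?_, ?_⟩
        · show Sum.inl i ∈ (if (0 : Fin 2) = 0 then Set.range Sum.inl else Set.range Sum.inr)
          rw [if_pos rfl]
          exact ⟨i, rfl⟩
        · intro j hj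
          have hj' : Sum.inl i ∈ (if j = 0 then Set.range Sum.inl else Set.range Sum.inr) := hj
          by_contra hj0
          rw [if_neg hj0] at hj'
          obtain ⟨t, ht⟩ := hj'
          cases ht
    | inr t =>
        refine ⟨1, ?_, ?_⟩
        · show Sum.inr t ∈ (if (1 : Fin 2) = 0 then Set.range Sum.inl else Set.range Sum.inr)
          rw [if_neg (by decide : ¬(1 : Fin 2) = 0)]
          exact ⟨t, rfl⟩
        · intro j hj
          have hj' : Sum.inr t ∈ (if j = 0 then Set.range Sum.inl else Set.range Sum.inr) := hj
          by_cases hj0 : j = 0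
          · rw [hj0, if_pos rfl] at hj'
            obtain ⟨s, hs⟩ := hj'
            cases hs
          · have h2 := j.isLt
            rw [Fin.ext_iff] at hj0 ⊢
            simp only [Fin.val_zero, Fin.val_one] at *
            omega
  · intro v i
    have hi2 : i = 0 ∨ i = 1 := by
      have h2 := i.isLt
      by_cases h : (i : ℕ) = 0
      · exact Or.inl (Fin.ext h)
      · exact Or.inr (Fin.ext (by omega))
    have hP0 : (fun i : Fin 2 => if i = 0 then
        (Set.range Sum.inl : Set (Fin n ⊕ (Fin n × Fin ((n-1)/2) × Bool)))
        else Set.range Sum.inr) 0 = Set.range Sum.inl := rfl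
    have hP1 : (fun i : Fin 2 => if i = 0 then
        (Set.range Sum.inl : Set (Fin n ⊕ (Fin n × Fin ((n-1)/2) × Bool)))
        else Set.range Sum.inr) 1 = Set.range Sum.inr := rfl
    cases v with
    | inl i0 =>
        rcases hi2 with rfl | rfl
        · rw [hP0, if_pos ⟨i0, rfl⟩, hA i0, hAc i0, hNc i0]
          have h1 : (1:ℕ) ≤ n := by omega
          push_cast [h1]
          ring
        · rw [hP1, if_neg (by rintro ⟨s, hs⟩; cases hs), hB i0, hBc i0, hNc i0]
          have h1 : (1:ℕ) ≤ n := by omega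
          push_cast [h1]
          ring
    | inr t =>
        rcases hi2 with rfl | rfl
        · rw [hP0, if_neg (by rintro ⟨s, hs⟩; cases hs), hC t, Set.ncard_singleton, hNc2 t]
          norm_num
        · rw [hP1, if_pos ⟨t, rfl⟩, hD t, Set.ncard_singleton, hNc2 t]
          norm_num

theorem fat_pendant_triangles (n : ℕ) (hodd : Odd n) (hn : 5 ≤ n) :
    (pendantTriangles n).chromaticNumber = (n : ℕ∞) ∧
    fatChromaticNumber (pendantTriangles n) = 2 := by
  constructor
  · exact pt_chrom n (by omega)
  · have hmem : 2 ∈ {k : ℕ | ∃ P : Fin k → Set (Fin n ⊕ (Fin n × Fin ((n-1)/2) × Bool)),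
        ∃ α β : ℝ, IsFATColoring (pendantTriangles n) k P α β} :=
      ⟨_, 1/2, 1/2, pt_fat2 n hodd hn⟩
    have hub : ∀ k ∈ {k : ℕ | ∃ P : Fin k → Set (Fin n ⊕ (Fin n × Fin ((n-1)/2) × Bool)),
        ∃ α β : ℝ, IsFATColoring (pendantTriangles n) k P α β}, k ≤ 2 := by
      intro k hk
      by_contra hk2
      obtain ⟨P, α, β, hP⟩ := hk
      exact no_fat n hn (by omega) P α β hP
    rw [fatChromaticNumber]
    exact le_antisymm (csSup_le ⟨2, hmem⟩ hub) (le_csSup ⟨2, hub⟩ hmem)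
end

section
/- Let n ≥ 3 and let G be the graph obtained from the complete graph Kₙ on vertices a₁,...,aₙ by adjoining one new vertex a_{n+1} adjacent only to a₁. Then χ(G) = n and χ^FAT(G) = 1. -/
open SimpleGraph
open scoped Classical

/-- The graph obtained from the complete graph `Kₙ` on the vertices
`0, 1, ..., n-1` of `Fin (n+1)` by adjoining the new vertex `n`
adjacent only to the vertex `0`. -/
def KnPendant (n : ℕ) : SimpleGraph (Fin (n + 1)) where
  Adj a b := a ≠ b ∧ (a.val = n → b.val = 0) ∧ (b.val = n → a.val = 0)
  symm := ⟨fun a b h => ⟨h.1.symm, h.2.2, h.2.1⟩⟩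
  loopless := ⟨fun a h => h.1 rfl⟩


lemma knPendant_adj (n : ℕ) (a b : Fin (n + 1)) :
    (KnPendant n).Adj a b ↔
      a ≠ b ∧ (a.val = n → b.val = 0) ∧ (b.val = n → a.val = 0) := Iff.rfl

lemma knPendant_adj_small (n : ℕ) (a b : Fin (n + 1))
    (ha : a.val < n) (hb : b.val < n) (hab : a ≠ b) : (KnPendant n).Adj a b :=
  ⟨hab, fun h => absurd h (by omega), fun h => absurd h (by omega)⟩

lemma knPendant_nb_last (n : ℕ) (hn : 3 ≤ n) :
    (KnPendant n).neighborSet ⟨n, by omega⟩ = {⟨0, by omega⟩} := by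
  ext b
  rw [Set.mem_singleton_iff, mem_neighborSet]
  constructor
  · rintro ⟨h1, h2, h3⟩
    exact Fin.ext (h2 rfl)
  · rintro rfl
    refine ⟨Fin.ne_of_val_ne ?_, fun _ => rfl, fun h => absurd h ?_⟩
    · show n ≠ 0
      omega
    · show ¬((0 : ℕ) = n)
      omega

lemma knPendant_nb_zero (n : ℕ) (hn : 3 ≤ n) :
    (KnPendant n).neighborSet ⟨0, by omega⟩ = {(⟨0, by omega⟩ : Fin (n + 1))}ᶜ := by
  ext b
  rw [Set.mem_compl_iff, Set.mem_singleton_iff, mem_neighborSet]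
  constructor
  · rintro ⟨h1, h2, h3⟩
    exact fun e => h1 e.symm
  · intro h
    refine ⟨fun e => h e.symm, fun e => absurd e ?_, fun _ => rfl⟩
    show ¬((0 : ℕ) = n)
    omega

lemma ncard_compl_singleton {m : ℕ} (a : Fin (m + 1)) :
    ({a}ᶜ : Set (Fin (m + 1))).ncard = m := by
  have h := Set.ncard_add_ncard_compl ({a} : Set (Fin (m + 1)))
  rw [Set.ncard_singleton, Nat.card_eq_fintype_card, Fintype.card_fin] at h
  omega

/-- There is no FAT `k`-coloring of `KnPendant n` for `k ≥ 2`. -/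
lemma knPendant_no_fat (n k : ℕ) (hn : 3 ≤ n) (hk : 2 ≤ k)
    (P : Fin k → Set (Fin (n + 1))) (α β : ℝ)
    (h : IsFATColoring (KnPendant n) k P α β) : False := by
  obtain ⟨hne, hpart, hα0, hα1, hβ0, hβ1, heq⟩ := h
  set v0 : Fin (n + 1) := ⟨0, by omega⟩ with hv0
  set v1 : Fin (n + 1) := ⟨1, by omega⟩ with hv1
  set v2 : Fin (n + 1) := ⟨2, by omega⟩ with hv2
  set vl : Fin (n + 1) := ⟨n, by omega⟩ with hvl
  obtain ⟨c0, hc0, hc0u⟩ := hpart v0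
  -- the neighbor sets of the pendant vertex and of `v0`
  have hNl : (KnPendant n).neighborSet vl = {v0} := knPendant_nb_last n hn
  have hN0 : (KnPendant n).neighborSet v0 = {v0}ᶜ := knPendant_nb_zero n hn
  have hNlcard : ((KnPendant n).neighborSet vl).ncard = 1 := by
    rw [hNl]; exact Set.ncard_singleton _
  have hN0card : ((KnPendant n).neighborSet v0).ncard = n := by
    rw [hN0]; exact ncard_compl_singleton v0
  have hNl_int : ∀ i : Fin k,
      ((KnPendant n).neighborSet vl ∩ P i).ncard = if v0 ∈ P i then 1 else 0 := by
    intro i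
    rw [hNl]
    split
    · rw [Set.inter_eq_left.mpr (Set.singleton_subset_iff.mpr (by assumption))]
      exact Set.ncard_singleton _
    · rw [Set.singleton_inter_eq_empty.mpr (by assumption), Set.ncard_empty]
  -- if the count of neighbors of `v0` in `P i` equals `n`, then `N(v0) ⊆ P i`
  have hfull : ∀ i : Fin k,
      ((KnPendant n).neighborSet v0 ∩ P i).ncard = n →
      (KnPendant n).neighborSet v0 ⊆ P i := by
    intro i hi
    have hsub : (KnPendant n).neighborSet v0 ∩ P i ⊆ (KnPendant n).neighborSet v0 :=
      Set.inter_subset_left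
    have hset := Set.eq_of_subset_of_ncard_le hsub (by rw [hi, hN0card]) (Set.toFinite _)
    intro x hx
    have hx2 : x ∈ (KnPendant n).neighborSet v0 ∩ P i := by rw [hset]; exact hx
    exact hx2.2
  by_cases hl : vl ∈ P c0
  · -- Case A : β = 1, all neighbors of `v0` are in `P c0`
    have h1 := heq vl c0
    rw [hNl_int c0, if_pos hc0, if_pos hl, hNlcard] at h1
    have hβ : β = 1 := by push_cast at h1; linarith
    have h2 := heq v0 c0
    rw [if_pos hc0, hβ, one_mul, Nat.cast_inj] at h2
    have hsub := hfull c0 (by rw [h2, hN0card])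
    haveI : Nontrivial (Fin k) := Fin.nontrivial_iff_two_le.mpr hk
    obtain ⟨i, hi⟩ := exists_ne c0
    obtain ⟨w, hw⟩ := hne i
    have hwne : w ≠ v0 := by
      rintro rfl
      exact hi (hc0u i hw)
    have hwN : w ∈ (KnPendant n).neighborSet v0 := by
      rw [hN0]; exact hwne
    obtain ⟨j, hj, hju⟩ := hpart w
    have e1 : i = j := hju i hw
    have e2 : c0 = j := hju c0 (hsub hwN)
    exact hi (e1.trans e2.symm)
  · -- Case B : α = 1, β = 0
    obtain ⟨cl, hcl, hclu⟩ := hpart vl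
    have h1 := heq vl c0
    rw [hNl_int c0, if_pos hc0, if_neg hl, hNlcard] at h1
    have hα : α = 1 := by push_cast at h1; linarith
    have hv0notcl : v0 ∉ P cl := by
      intro hmem
      exact hl ((hc0u cl hmem) ▸ hcl)
    have h2 := heq vl cl
    rw [hNl_int cl, if_neg hv0notcl, if_pos hcl, hNlcard] at h2
    have hβ : β = 0 := by push_cast at h2; linarith
    -- adjacent vertices never share a class
    have hdiff : ∀ u v : Fin (n + 1), (KnPendant n).Adj v u →
        ∀ j : Fin k, v ∈ P j → u ∉ P j := by
      intro u v hadj j hvj huj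
      have h3 := heq v j
      rw [if_pos hvj, hβ, zero_mul] at h3
      have h4 : ((KnPendant n).neighborSet v ∩ P j).ncard = 0 := by exact_mod_cast h3
      have hempty := (Set.ncard_eq_zero (Set.toFinite _)).mp h4
      have hmem : u ∈ (KnPendant n).neighborSet v ∩ P j := ⟨hadj, huj⟩
      rw [hempty] at hmem
      exact hmem
    -- the vertices `v0`, `v1`, `v2` are mutually adjacent
    have hadj01 : (KnPendant n).Adj v0 v1 :=
      knPendant_adj_small n v0 v1 (show (0 : ℕ) < n by omega) (show (1 : ℕ) < n by omega)
        (Fin.ne_of_val_ne (show (0 : ℕ) ≠ 1 by omega))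
    have hadj20 : (KnPendant n).Adj v2 v0 :=
      knPendant_adj_small n v2 v0 (show (2 : ℕ) < n by omega) (show (0 : ℕ) < n by omega)
        (Fin.ne_of_val_ne (show (2 : ℕ) ≠ 0 by omega))
    have hadj21 : (KnPendant n).Adj v2 v1 :=
      knPendant_adj_small n v2 v1 (show (2 : ℕ) < n by omega) (show (1 : ℕ) < n by omega)
        (Fin.ne_of_val_ne (show (2 : ℕ) ≠ 1 by omega))
    obtain ⟨c2, hc2, hc2u⟩ := hpart v2
    have hv0notc2 : v0 ∉ P c2 := hdiff v0 v2 hadj20 c2 hc2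
    have hv1notc2 : v1 ∉ P c2 := hdiff v1 v2 hadj21 c2 hc2
    have h4 := heq v0 c2
    rw [if_neg hv0notc2, hα, one_mul, Nat.cast_inj] at h4
    have hsub := hfull c2 (by rw [h4, hN0card])
    exact hv1notc2 (hsub hadj01)

theorem fat_Kn_pendant (n : ℕ) (hn : 3 ≤ n) :
    (KnPendant n).chromaticNumber = (n : ℕ∞) ∧
    fatChromaticNumber (KnPendant n) = 1 := by
  constructor
  · -- chromatic number is n
    have hcol : (KnPendant n).Colorable n := by
      refine ⟨Coloring.mk (fun v => if h : v.val < n then ⟨v.val, h⟩ else ⟨1, by omega⟩) ?_⟩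
      rintro a b ⟨hab, h2, h3⟩ hfab
      by_cases ha : a.val < n <;> by_cases hb : b.val < n
      · simp only [dif_pos ha, dif_pos hb] at hfab
        have hv := congrArg Fin.val hfab
        simp only [Fin.val_mk] at hv
        exact hab (Fin.ext hv)
      · have hbn : b.val = n := by omega
        have ha0 := h3 hbn
        simp only [dif_pos ha, dif_neg hb] at hfab
        have := congrArg Fin.val hfab
        simp only [Fin.val_mk] at this
        omega
      · have han : a.val = n := by omega
        have hb0 := h2 han
        simp only [dif_neg ha, dif_pos hb] at hfab
        have := congrArg Fin.val hfab
        simp only [Fin.val_mk] at this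
        omega
      · have han : a.val = n := by omega
        have hb0 := h2 han
        omega
    have hupper : (KnPendant n).chromaticNumber ≤ (n : ℕ∞) := hcol.chromaticNumber_le
    have hemb : (⊤ : SimpleGraph (Fin n)) ↪g KnPendant n :=
      { toFun := Fin.castSucc
        inj' := Fin.castSucc_injective n
        map_rel_iff' := by
          intro a b
          simp only [knPendant_adj, top_adj, Function.Embedding.coeFn_mk]
          constructor
          · rintro ⟨h, -, -⟩
            exact fun e => h (by rw [e])
          · intro h
            refine ⟨fun e => h (Fin.castSucc_injective n e), fun e => ?_, fun e => ?_⟩ <;>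
            · exfalso
              rw [Fin.coe_castSucc] at e
              omega }
    have hlower : (n : ℕ∞) ≤ (KnPendant n).chromaticNumber := by
      have := chromaticNumber_mono_of_hom hemb.toHom
      rwa [chromaticNumber_top, Fintype.card_fin] at this
    exact le_antisymm hupper hlower
  · -- FAT chromatic number is 1
    have h1 : 1 ∈ {k : ℕ | ∃ P : Fin k → Set (Fin (n + 1)), ∃ α β : ℝ,
        IsFATColoring (KnPendant n) k P α β} := by
      refine ⟨fun _ => Set.univ, 0, 1, ?_, ?_, ?_, ?_, ?_, ?_, ?_⟩
      · intro i
        exact ⟨0, trivial⟩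
      · intro v
        exact ⟨0, trivial, fun j _ => Subsingleton.elim j 0⟩
      · norm_num
      · norm_num
      · norm_num
      · norm_num
      · intro v i
        simp
    have hub : ∀ m ∈ {k : ℕ | ∃ P : Fin k → Set (Fin (n + 1)), ∃ α β : ℝ,
        IsFATColoring (KnPendant n) k P α β}, m ≤ 1 := by
      rintro m ⟨P, α, β, hP⟩
      by_contra hm
      exact knPendant_no_fat n m hn (by omega) P α β hP
    exact le_antisymm (csSup_le ⟨1, h1⟩ hub) (le_csSup ⟨1, hub⟩ h1)
end
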